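/- arXiv:1705.05704 — 3 statements merged into one kernel-verified Lean document; each statement's English description precedes it below -/
import Mathlib

section
/- For all integers b ≥ a ≥ 1 and real 0 < φ ≤ 1, the product ∏_{i=a}^{b} i/(i+φ) is at most (a/b)^φ. -/
lemma tele (a : ℕ) (ha : 1 ≤ a) : ∀ b, a ≤ b →
    ∏ i ∈ Finset.Icc a b, (i : ℝ) / ((i : ℝ) + 1) = (a : ℝ) / ((b : ℝ) + 1) := by
  intro b
  induction b with
  | zero => intro h; omega
  | succ n ih =>
    intro h
    rcases eq_or_lt_of_le h with h' | h'
    · subst h'; simp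
    · have hn : a ≤ n := by omega
      rw [Finset.prod_Icc_succ_top h, ih hn]
      have h1 : (n : ℝ) + 1 ≠ 0 := by positivity
      push_cast
      field_simp

theorem stmt_0 (a b : ℕ) (ha : 1 ≤ a) (hab : a ≤ b) (φ : ℝ) (hφ0 : 0 < φ) (hφ1 : φ ≤ 1) :
    ∏ i ∈ Finset.Icc a b, (i : ℝ) / ((i : ℝ) + φ) ≤ ((a : ℝ) / (b : ℝ)) ^ φ := by
  have key : ∀ i ∈ Finset.Icc a b,
      (i : ℝ) / ((i : ℝ) + φ) ≤ ((i : ℝ) / ((i : ℝ) + 1)) ^ φ := by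
    intro i hi
    simp only [Finset.mem_Icc] at hi
    have hi1 : (1 : ℝ) ≤ (i : ℝ) := by exact_mod_cast le_trans ha hi.1
    have hipos : (0 : ℝ) < i := by linarith
    have hiφ : (0 : ℝ) < (i : ℝ) + φ := by linarith
    have hi1' : (0 : ℝ) < (i : ℝ) + 1 := by linarith
    have hs : (-1 : ℝ) ≤ 1 / (i : ℝ) := le_trans (by norm_num : (-1:ℝ) ≤ 0) (by positivity)
    have hb := rpow_one_add_le_one_add_mul_self hs hφ0.le hφ1
    have h1 : (1 : ℝ) + 1 / i = (i + 1) / i := by field_simp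
    have h2 : (1 : ℝ) + φ * (1 / i) = (i + φ) / i := by field_simp
    rw [h1, h2] at hb
    have hinv : (i : ℝ) / ((i : ℝ) + 1) = ((((i : ℝ) + 1) / i))⁻¹ := by
      rw [inv_div]
    rw [hinv, ← Real.rpow_neg_one, ← Real.rpow_mul (by positivity), neg_one_mul,
      Real.rpow_neg (by positivity)]
    have h3 : (i : ℝ) / ((i : ℝ) + φ) = (((i : ℝ) + φ) / i)⁻¹ := by rw [inv_div]
    rw [h3]
    apply inv_anti₀
    · positivity
    · exact hb
  calc ∏ i ∈ Finset.Icc a b, (i : ℝ) / ((i : ℝ) + φ)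
      ≤ ∏ i ∈ Finset.Icc a b, ((i : ℝ) / ((i : ℝ) + 1)) ^ φ := by
        apply Finset.prod_le_prod
        · intro i hi
          simp only [Finset.mem_Icc] at hi
          have : (1 : ℝ) ≤ (i : ℝ) := by exact_mod_cast le_trans ha hi.1
          positivity
        · exact key
    _ = (∏ i ∈ Finset.Icc a b, (i : ℝ) / ((i : ℝ) + 1)) ^ φ := by
        rw [← Real.finset_prod_rpow]
        intro i hi
        simp only [Finset.mem_Icc] at hi
        have : (1 : ℝ) ≤ (i : ℝ) := by exact_mod_cast le_trans ha hi.1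
        positivity
    _ = ((a : ℝ) / ((b : ℝ) + 1)) ^ φ := by rw [tele a ha b hab]
    _ ≤ ((a : ℝ) / (b : ℝ)) ^ φ := by
        have hb1 : (1 : ℝ) ≤ (b : ℝ) := by exact_mod_cast le_trans ha hab
        apply Real.rpow_le_rpow (by positivity)
        · apply div_le_div_of_nonneg_left (by positivity) (by linarith) (by linarith)
        · exact hφ0.le
end

section
/- Let k ≥ 2 be an integer, 0 < b < 1, and σ = b/(b+k-1). Define OPT : (0,1] × [0,∞) → [0,1] by OPT(x,t) = 1 if t ≤ σx; (σx/t)^{b/(k-1)} if σx < t ≤ σ; ((1-t)/(1-σ))·x^{b/(k-1)} if σ < t ≤ 1; and 0 if t > 1. Then ∫_0^∞ ∫_0^1 x^{-b}·OPT(x,t)^k dx dt = σ(2-σ)/(2-b) + (1-σ)²/(k+1). -/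
open MeasureTheory Set

set_option maxHeartbeats 2000000 in
theorem stmt_12 (k : ℕ) (hk : 2 ≤ k) (b : ℝ) (hb0 : 0 < b) (hb1 : b < 1)
    (σ : ℝ) (hσ : σ = b / (b + (k : ℝ) - 1))
    (OPT : ℝ → ℝ → ℝ)
    (hOPT : ∀ x ∈ Set.Ioc (0 : ℝ) 1, ∀ t : ℝ, 0 ≤ t →
      OPT x t = if t ≤ σ * x then 1
        else if t ≤ σ then (σ * x / t) ^ (b / ((k : ℝ) - 1))
        else if t ≤ 1 then ((1 - t) / (1 - σ)) * x ^ (b / ((k : ℝ) - 1))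
        else 0) :
    ∫ t in Set.Ici (0 : ℝ), ∫ x in Set.Ioc (0 : ℝ) 1, x ^ (-b) * (OPT x t) ^ k
      = σ * (2 - σ) / (2 - b) + (1 - σ) ^ 2 / ((k : ℝ) + 1) := by
  have hK : (2:ℝ) ≤ (k:ℝ) := by exact_mod_cast hk
  have hK1 : (0:ℝ) < (k:ℝ) - 1 := by linarith
  have hden : (0:ℝ) < b + (k:ℝ) - 1 := by linarith
  have hσ0 : 0 < σ := by rw [hσ]; positivity
  have hσ1 : σ < 1 := by rw [hσ, div_lt_one hden]; linarith
  have h1b : (0:ℝ) < 1 - b := by linarith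
  have h2b : (0:ℝ) < 2 - b := by linarith
  set β : ℝ := b / ((k:ℝ) - 1) with hβdef
  have hβ0 : 0 < β := by positivity
  have hβ1 : (-1:ℝ) < β := by linarith
  have hβb : β * ((k:ℝ) - 1) = b := div_mul_cancel₀ _ (ne_of_gt hK1)
  have hβ1' : β + 1 ≠ 0 := by positivity
  have hinv : (β + 1)⁻¹ = 1 - σ := by
    rw [hσ, hβdef]
    have e1 : b / ((k:ℝ) - 1) + 1 = (b + (k:ℝ) - 1) / ((k:ℝ) - 1) := by field_simp; ring
    have e2 : 1 - b / (b + (k:ℝ) - 1) = ((k:ℝ) - 1) / (b + (k:ℝ) - 1) := by field_simp; ring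
    rw [e1, e2, inv_div]
  have h1bm : (-1:ℝ) < -b := by linarith
  have hexp1 : -b + β * (k:ℝ) = β := by linear_combination hβb
  -- base integral of x^β over (0,1]
  have hbase : ∫ x in Ioc (0:ℝ) 1, x ^ β = (β + 1)⁻¹ := by
    rw [← intervalIntegral.integral_of_le zero_le_one, integral_rpow (Or.inl hβ1),
      Real.one_rpow, Real.zero_rpow hβ1']
    rw [sub_zero, one_div]
  set F : ℝ → ℝ := fun t => ∫ x in Ioc (0:ℝ) 1, x ^ (-b) * (OPT x t) ^ k with hF
  set A : ℝ := σ ^ (1 - b) with hA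
  have hA0 : A ≠ 0 := by rw [hA]; positivity
  set E : ℝ := ((β + 1)⁻¹ - (1 - b)⁻¹) / A with hE
  -- Case 1 : t ∈ Ioc 0 σ
  have h1 : ∀ t ∈ Ioc (0:ℝ) σ, F t = t ^ (1 - b) * E + (1 - b)⁻¹ := by
    intro t ht
    have ht0 : 0 < t := ht.1
    set s : ℝ := t / σ with hs
    have hs0 : 0 < s := div_pos ht0 hσ0
    have hs1 : s ≤ 1 := (div_le_one hσ0).2 ht.2
    have eqA : EqOn (fun x => x ^ (-b) * (OPT x t) ^ k)
        (fun x => (σ / t) ^ (β * (k:ℝ)) * x ^ β) (Ioc 0 s) := by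
      intro x hx
      have hx0 : 0 < x := hx.1
      have hx1 : x ≤ 1 := hx.2.trans hs1
      show x ^ (-b) * (OPT x t) ^ k = (σ / t) ^ (β * (k:ℝ)) * x ^ β
      rw [hOPT x ⟨hx0, hx1⟩ t ht0.le]
      by_cases hc : t ≤ σ * x
      · have heq : σ * x = t := by
          have : σ * x ≤ σ * s := by nlinarith [hx.2]
          have hss : σ * s = t := by rw [hs, mul_comm, div_mul_cancel₀ _ (ne_of_gt hσ0)]
          exact le_antisymm (by linarith) hc
        rw [if_pos hc, one_pow, mul_one]
        have hst : σ / t = x⁻¹ := by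
          rw [← heq, div_mul_cancel_left₀ (ne_of_gt hσ0)]
        rw [hst, Real.inv_rpow hx0.le, ← Real.rpow_neg hx0.le, ← Real.rpow_add hx0]
        congr 1
        linear_combination hβb
      · rw [if_neg hc, if_pos ht.2]
        have hfrac : σ * x / t = σ / t * x := by ring
        rw [hfrac, ← Real.rpow_natCast ((σ / t * x) ^ β) k,
          ← Real.rpow_mul (by positivity), Real.mul_rpow (by positivity) hx0.le,
          ← mul_assoc, mul_comm (x ^ (-b)) _, mul_assoc, ← Real.rpow_add hx0, hexp1]
    have eqB : EqOn (fun x => x ^ (-b) * (OPT x t) ^ k)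
        (fun x => x ^ (-b)) (Ioc s 1) := by
      intro x hx
      have hx0 : 0 < x := hs0.trans hx.1
      show x ^ (-b) * (OPT x t) ^ k = x ^ (-b)
      rw [hOPT x ⟨hx0, hx.2⟩ t ht0.le]
      have hc : t ≤ σ * x := by
        have : s < x := hx.1
        rw [hs, div_lt_iff₀ hσ0] at this
        nlinarith
      rw [if_pos hc, one_pow, mul_one]
    have intA : IntegrableOn (fun x => (σ / t) ^ (β * (k:ℝ)) * x ^ β) (Ioc 0 s) :=
      (intervalIntegrable_iff_integrableOn_Ioc_of_le hs0.le).1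
        ((intervalIntegral.intervalIntegrable_rpow' hβ1).const_mul _)
    have intB : IntegrableOn (fun x : ℝ => x ^ (-b)) (Ioc s 1) :=
      (intervalIntegrable_iff_integrableOn_Ioc_of_le hs1).1
        (intervalIntegral.intervalIntegrable_rpow' h1bm)
    have split : F t = (∫ x in Ioc (0:ℝ) s, x ^ (-b) * (OPT x t) ^ k)
        + ∫ x in Ioc s 1, x ^ (-b) * (OPT x t) ^ k := by
      simp only [hF]
      rw [show Ioc (0:ℝ) 1 = Ioc 0 s ∪ Ioc s 1 from (Ioc_union_Ioc_eq_Ioc hs0.le hs1).symm,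
        setIntegral_union (Ioc_disjoint_Ioc_of_le le_rfl) measurableSet_Ioc
          (intA.congr_fun eqA.symm measurableSet_Ioc)
          (intB.congr_fun eqB.symm measurableSet_Ioc)]
    rw [split, setIntegral_congr_fun measurableSet_Ioc eqA,
      setIntegral_congr_fun measurableSet_Ioc eqB]
    have pieceA : ∫ x in Ioc (0:ℝ) s, (σ / t) ^ (β * (k:ℝ)) * x ^ β
        = s ^ (1 - b) * (β + 1)⁻¹ := by
      rw [MeasureTheory.integral_const_mul, ← intervalIntegral.integral_of_le hs0.le,
        integral_rpow (Or.inl hβ1), Real.zero_rpow hβ1']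
      have hst : σ / t = s⁻¹ := by rw [hs, inv_div]
      rw [hst, Real.inv_rpow hs0.le, ← Real.rpow_neg hs0.le]
      rw [sub_zero, div_eq_mul_inv, ← mul_assoc, ← Real.rpow_add hs0]
      congr 2
      linear_combination -hβb
    have pieceB : ∫ x in Ioc s 1, x ^ (-b) = (1 - s ^ (1 - b)) * (1 - b)⁻¹ := by
      rw [← intervalIntegral.integral_of_le hs1, integral_rpow (Or.inl h1bm),
        Real.one_rpow]
      rw [show -b + 1 = 1 - b from by ring, div_eq_mul_inv]
    rw [pieceA, pieceB]
    have hsval : s ^ (1 - b) = t ^ (1 - b) / A := by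
      rw [hs, Real.div_rpow ht0.le hσ0.le, hA]
    rw [hsval, hE]
    field_simp
    ring
  -- Case 2 : t ∈ Ioc σ 1
  have h2 : ∀ t ∈ Ioc σ 1, F t = ((1 - t) / (1 - σ)) ^ k * (1 - σ) := by
    intro t ht
    have ht0 : 0 < t := hσ0.trans ht.1
    have eqC : EqOn (fun x => x ^ (-b) * (OPT x t) ^ k)
        (fun x => ((1 - t) / (1 - σ)) ^ k * x ^ β) (Ioc 0 1) := by
      intro x hx
      have hx0 : 0 < x := hx.1
      show x ^ (-b) * (OPT x t) ^ k = ((1 - t) / (1 - σ)) ^ k * x ^ β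
      have hσx : σ * x ≤ σ := by nlinarith [hx.2]
      rw [hOPT x hx t ht0.le, if_neg (not_le.2 (lt_of_le_of_lt hσx ht.1)),
        if_neg (not_le.2 ht.1), if_pos ht.2]
      rw [mul_pow, ← Real.rpow_natCast (x ^ β) k, ← Real.rpow_mul hx0.le,
        ← mul_assoc, mul_comm (x ^ (-b)) _, mul_assoc, ← Real.rpow_add hx0, hexp1]
    simp only [hF]
    rw [setIntegral_congr_fun measurableSet_Ioc eqC, MeasureTheory.integral_const_mul,
      hbase, hinv]
  -- Case 3 : t > 1
  have h3 : ∀ t ∈ Ioi (1:ℝ), F t = 0 := by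
    intro t ht
    have ht1 : (1:ℝ) < t := ht
    have eqZ : EqOn (fun x => x ^ (-b) * (OPT x t) ^ k) (fun _ => (0:ℝ)) (Ioc 0 1) := by
      intro x hx
      show x ^ (-b) * (OPT x t) ^ k = 0
      rw [hOPT x hx t (by linarith)]
      have hσx : σ * x ≤ σ := by nlinarith [hx.2, hx.1]
      rw [if_neg (not_le.2 (by linarith : σ * x < t)),
        if_neg (by linarith), if_neg (by linarith)]
      rw [zero_pow (by omega : k ≠ 0), mul_zero]
    simp only [hF]
    rw [setIntegral_congr_fun measurableSet_Ioc eqZ, integral_zero]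
  -- integrability of F on the three pieces
  have intP1 : IntegrableOn F (Ioc 0 σ) := by
    have : IntegrableOn (fun t : ℝ => t ^ (1 - b) * E + (1 - b)⁻¹) (Ioc 0 σ) :=
      (intervalIntegrable_iff_integrableOn_Ioc_of_le hσ0.le).1
        (((intervalIntegral.intervalIntegrable_rpow' (by linarith)).mul_const E).add
          intervalIntegrable_const)
    exact this.congr_fun (fun t ht => (h1 t ht).symm) measurableSet_Ioc
  have intP2 : IntegrableOn F (Ioc σ 1) := by
    have : IntegrableOn (fun t : ℝ => ((1 - t) / (1 - σ)) ^ k * (1 - σ)) (Ioc σ 1) :=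
      (Continuous.integrableOn_Ioc ((((continuous_const.sub continuous_id).div_const (1 - σ)).pow k).mul continuous_const))
    exact this.congr_fun (fun t ht => (h2 t ht).symm) measurableSet_Ioc
  have intP3 : IntegrableOn F (Ioi 1) := by
    have : IntegrableOn (fun _ : ℝ => (0:ℝ)) (Ioi 1) := integrableOn_zero
    exact this.congr_fun (fun t ht => (h3 t ht).symm) measurableSet_Ioi
  -- assemble outer integral
  have houter : ∫ t in Ici (0:ℝ), F t
      = (∫ t in Ioc (0:ℝ) σ, F t) + (∫ t in Ioc σ 1, F t) + ∫ t in Ioi (1:ℝ), F t := by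
    rw [MeasureTheory.integral_Ici_eq_integral_Ioi,
      show Ioi (0:ℝ) = Ioc 0 1 ∪ Ioi 1 from (Ioc_union_Ioi_eq_Ioi zero_le_one).symm,
      setIntegral_union (Ioc_disjoint_Ioi le_rfl) measurableSet_Ioi
        (by rw [show Ioc (0:ℝ) 1 = Ioc 0 σ ∪ Ioc σ 1 from
              (Ioc_union_Ioc_eq_Ioc hσ0.le hσ1.le).symm]
            exact intP1.union intP2) intP3,
      show Ioc (0:ℝ) 1 = Ioc 0 σ ∪ Ioc σ 1 from (Ioc_union_Ioc_eq_Ioc hσ0.le hσ1.le).symm,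
      setIntegral_union (Ioc_disjoint_Ioc_of_le le_rfl) measurableSet_Ioc intP1 intP2]
  have val1 : ∫ t in Ioc (0:ℝ) σ, F t = σ ^ (2 - b) / (2 - b) * E + σ * (1 - b)⁻¹ := by
    rw [setIntegral_congr_fun measurableSet_Ioc h1, ← intervalIntegral.integral_of_le hσ0.le,
      intervalIntegral.integral_add
        ((intervalIntegral.intervalIntegrable_rpow' (by linarith)).mul_const E)
        intervalIntegrable_const,
      intervalIntegral.integral_mul_const, integral_rpow (Or.inl (by linarith : (-1:ℝ) < 1 - b)),
      intervalIntegral.integral_const, Real.zero_rpow (by linarith : 1 - b + 1 ≠ 0)]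
    rw [show (1:ℝ) - b + 1 = 2 - b from by ring]
    rw [smul_eq_mul, sub_zero, sub_zero]
  have val2 : ∫ t in Ioc σ 1, F t = (1 - σ) ^ 2 / ((k:ℝ) + 1) := by
    rw [setIntegral_congr_fun measurableSet_Ioc h2, ← intervalIntegral.integral_of_le hσ1.le,
      intervalIntegral.integral_mul_const]
    have : (∫ t in σ..1, ((1 - t) / (1 - σ)) ^ k)
        = (∫ t in σ..1, (1 - t) ^ k) / (1 - σ) ^ k := by
      simp only [div_pow]
      rw [intervalIntegral.integral_div]
    rw [this]
    have hcomp : (∫ t in σ..1, (1 - t) ^ k) = ∫ u in (1-1:ℝ)..(1-σ), u ^ k :=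
      intervalIntegral.integral_comp_sub_left (fun u => u ^ k) 1
    rw [hcomp, integral_pow]
    have hσ1' : (1:ℝ) - σ ≠ 0 := by linarith
    have hkne : ((1:ℝ) - σ) ^ k ≠ 0 := pow_ne_zero _ hσ1'
    rw [show (1:ℝ) - 1 = 0 from by ring, zero_pow (by omega : k + 1 ≠ 0), sub_zero]
    rw [pow_succ]
    field_simp
  have val3 : ∫ t in Ioi (1:ℝ), F t = 0 := by
    rw [setIntegral_congr_fun measurableSet_Ioi h3, integral_zero]
  calc ∫ t in Ici (0:ℝ), F t
      = σ ^ (2 - b) / (2 - b) * E + σ * (1 - b)⁻¹ + (1 - σ) ^ 2 / ((k:ℝ) + 1) + 0 := by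
        rw [houter, val1, val2, val3]
    _ = σ * (2 - σ) / (2 - b) + (1 - σ) ^ 2 / ((k:ℝ) + 1) := by
        have hσ2b : σ ^ (2 - b) = σ ^ (1 - b) * σ := by
          rw [show (2:ℝ) - b = (1 - b) + 1 from by ring, Real.rpow_add hσ0, Real.rpow_one]
        rw [hσ2b, hE, hinv, hA]
        have hApos : (0:ℝ) < σ ^ (1 - b) := Real.rpow_pos_of_pos hσ0 _
        field_simp
        ring
end

section
/- Let k ≥ 2, 0 < b < 1, σ = b/(b+k-1), and let OPT be as defined. Then for every t ∈ [0,1], ∫_0^1 (1 - OPT(x,t)) dx = t, i.e., OPT exactly saturates the column constraint. -/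
open MeasureTheory

private lemma aux_integral (β : ℝ) (hβ : 0 < β) (d a : ℝ) (ha : 0 ≤ a) :
    ∫ x in Set.Ioc (0:ℝ) a, (1 - d * x ^ β) = a - d * (a ^ (β+1) / (β+1)) := by
  rw [← intervalIntegral.integral_of_le ha]
  have h1 : IntervalIntegrable (fun _ : ℝ => (1:ℝ)) volume 0 a := intervalIntegrable_const
  have h2 : IntervalIntegrable (fun x : ℝ => d * x ^ β) volume 0 a :=
    (intervalIntegral.intervalIntegrable_rpow' (by linarith)).const_mul d
  rw [intervalIntegral.integral_sub h1 h2, intervalIntegral.integral_const,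
    intervalIntegral.integral_const_mul, integral_rpow (Or.inl (by linarith))]
  rw [Real.zero_rpow (by linarith : β + 1 ≠ 0)]
  simp [smul_eq_mul]

private lemma aux_integrable (β : ℝ) (hβ : 0 < β) (d a : ℝ) (ha : 0 ≤ a) :
    IntegrableOn (fun x : ℝ => 1 - d * x ^ β) (Set.Ioc (0:ℝ) a) volume := by
  have h1 : IntervalIntegrable (fun _ : ℝ => (1:ℝ)) volume 0 a := intervalIntegrable_const
  have h2 : IntervalIntegrable (fun x : ℝ => d * x ^ β) volume 0 a :=
    (intervalIntegral.intervalIntegrable_rpow' (by linarith)).const_mul d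
  exact (h1.sub h2).1

theorem stmt_13 (k : ℕ) (hk : 2 ≤ k) (b : ℝ) (hb0 : 0 < b) (hb1 : b < 1)
    (σ : ℝ) (hσ : σ = b / (b + (k : ℝ) - 1))
    (OPT : ℝ → ℝ → ℝ)
    (hOPT : ∀ x ∈ Set.Ioc (0 : ℝ) 1, ∀ t : ℝ, 0 ≤ t →
      OPT x t = if t ≤ σ * x then 1
        else if t ≤ σ then (σ * x / t) ^ (b / ((k : ℝ) - 1))
        else if t ≤ 1 then ((1 - t) / (1 - σ)) * x ^ (b / ((k : ℝ) - 1))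
        else 0) :
    ∀ t ∈ Set.Icc (0 : ℝ) 1, ∫ x in Set.Ioc (0 : ℝ) 1, (1 - OPT x t) = t := by
  have hk2 : (2:ℝ) ≤ (k:ℝ) := by exact_mod_cast hk
  have km1 : (0:ℝ) < (k:ℝ) - 1 := by linarith
  set β : ℝ := b / ((k:ℝ) - 1) with hβdef
  have hβ : 0 < β := div_pos hb0 km1
  have hden : (0:ℝ) < b + (k:ℝ) - 1 := by linarith
  have hσ0 : 0 < σ := by rw [hσ]; exact div_pos hb0 hden
  have hσ1 : σ < 1 := by rw [hσ, div_lt_one hden]; linarith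
  have hβ1 : β + 1 ≠ 0 := by linarith
  have hσβ : σ * (β + 1) = β := by
    rw [hσ, hβdef]; field_simp; ring
  intro t ht
  obtain ⟨ht0, ht1⟩ := ht
  rcases le_or_gt t σ with htσ | htσ
  · -- case t ≤ σ
    set a : ℝ := t / σ with hadef
    have ha0 : 0 ≤ a := div_nonneg ht0 hσ0.le
    have ha1 : a ≤ 1 := by rw [hadef, div_le_one hσ0]; linarith
    have hσa : σ * a = t := by rw [hadef]; field_simp
    have e1 : Set.EqOn (fun x : ℝ => 1 - OPT x t) (fun x => 1 - (σ/t)^β * x ^ β)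
        (Set.Ioc (0:ℝ) a) := by
      intro x hx
      obtain ⟨hx0, hxa⟩ := hx
      have ht' : 0 < t := by
        have : 0 < a := lt_of_lt_of_le hx0 hxa
        nlinarith
      have hmul : (σ/t)^β * x ^ β = (σ * x / t) ^ β := by
        rw [← Real.mul_rpow (by positivity) hx0.le]; ring_nf
      simp only
      rw [hOPT x ⟨hx0, hxa.trans ha1⟩ t ht0]
      by_cases h : t ≤ σ * x
      · have hxe : σ * x = t := le_antisymm (by nlinarith) h
        rw [if_pos h, hmul, hxe, div_self ht'.ne', Real.one_rpow]
      · rw [if_neg h, if_pos htσ, hmul]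
    have e2 : Set.EqOn (fun x : ℝ => 1 - OPT x t) (fun _ => (0:ℝ))
        (Set.Ioc a (1:ℝ)) := by
      intro x hx
      obtain ⟨hxa, hx1⟩ := hx
      have hx0 : 0 < x := lt_of_le_of_lt ha0 hxa
      have h : t ≤ σ * x := by nlinarith
      simp only
      rw [hOPT x ⟨hx0, hx1⟩ t ht0, if_pos h, sub_self]
    have hI1 : IntegrableOn (fun x : ℝ => 1 - OPT x t) (Set.Ioc (0:ℝ) a) volume :=
      (aux_integrable β hβ ((σ/t)^β) a ha0).congr_fun e1.symm measurableSet_Ioc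
    have hI2 : IntegrableOn (fun x : ℝ => 1 - OPT x t) (Set.Ioc a (1:ℝ)) volume :=
      (integrableOn_const measure_Ioc_lt_top.ne).congr_fun e2.symm measurableSet_Ioc
    rw [← Set.Ioc_union_Ioc_eq_Ioc ha0 ha1,
      setIntegral_union (Set.Ioc_disjoint_Ioc_of_le le_rfl) measurableSet_Ioc hI1 hI2,
      setIntegral_congr_fun measurableSet_Ioc e1,
      setIntegral_congr_fun measurableSet_Ioc e2,
      aux_integral β hβ ((σ/t)^β) a ha0]
    simp only [integral_const, smul_eq_mul, mul_zero, add_zero]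
    -- algebra: a - (σ/t)^β * (a^(β+1)/(β+1)) = t
    rcases eq_or_lt_of_le ht0 with h0 | h0
    · rw [← h0]
      have : a = 0 := by rw [hadef, ← h0, zero_div]
      rw [this, Real.zero_rpow hβ1]
      ring
    · have ha0' : 0 < a := by rw [hadef]; positivity
      rw [Real.rpow_add_one ha0'.ne' β]
      have key : (σ/t)^β * a ^ β = 1 := by
        rw [← Real.mul_rpow (by positivity) ha0, hadef]
        rw [div_mul_div_comm, mul_comm σ t, div_self (by positivity), Real.one_rpow]
      have hb1' : (0:ℝ) < β + 1 := by linarith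
      field_simp
      nlinarith [mul_pos ha0' hb1']
  · -- case σ < t
    set c : ℝ := (1 - t)/(1 - σ) with hcdef
    have e : Set.EqOn (fun x : ℝ => 1 - OPT x t) (fun x => 1 - c * x ^ β)
        (Set.Ioc (0:ℝ) 1) := by
      intro x hx
      obtain ⟨hx0, hx1⟩ := hx
      have h1 : ¬ t ≤ σ * x := by nlinarith
      simp only
      rw [hOPT x ⟨hx0, hx1⟩ t ht0, if_neg h1, if_neg (not_le.2 htσ), if_pos ht1]
    rw [setIntegral_congr_fun measurableSet_Ioc e,
      aux_integral β hβ c 1 zero_le_one, Real.one_rpow]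
    have h1σ : (1 - σ) * (β + 1) = 1 := by
      rw [hσ, hβdef]; field_simp; ring
    rw [hcdef]
    have h1σ' : (1:ℝ) - σ ≠ 0 := by linarith
    field_simp
    linear_combination (1 - t) * h1σ
end
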